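/- arXiv:1710.11502 — 6 statements merged into one kernel-verified Lean document; each statement's English description precedes it below -/
import Mathlib

section
/- Let 0 < λ < 1 and r > 1 be real numbers, and let w₀ > 0. Suppose (m_j) and (n_j) are sequences of natural numbers with n_j → ∞ such that λ^{m_j} · r^{n_j} → w₀ as j → ∞. Then m_j / n_j → - (log r) / (log λ). -/
open Filter Real

theorem stmt_0 (lam r w₀ : ℝ) (hlam0 : 0 < lam) (hlam1 : lam < 1) (hr : 1 < r)
    (hw : 0 < w₀) (m n : ℕ → ℕ)
    (hn : Tendsto (fun j => (n j : ℝ)) atTop atTop)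
    (hconv : Tendsto (fun j => lam ^ (m j) * r ^ (n j)) atTop (nhds w₀)) :
    Tendsto (fun j => (m j : ℝ) / (n j : ℝ)) atTop
      (nhds (-(Real.log r / Real.log lam))) := by
  have hloglam : Real.log lam < 0 := Real.log_neg hlam0 hlam1
  have hloglam' : Real.log lam ≠ 0 := ne_of_lt hloglam
  -- logs converge
  have hlog : Tendsto (fun j => (m j : ℝ) * Real.log lam + (n j : ℝ) * Real.log r)
      atTop (nhds (Real.log w₀)) := by
    have := (Real.continuousAt_log (ne_of_gt hw)).tendsto.comp hconv
    refine this.congr fun j => ?_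
    show Real.log (lam ^ m j * r ^ n j) = _
    rw [Real.log_mul (by positivity) (by positivity), Real.log_pow, Real.log_pow]

  -- (m log λ + n log r)/n → 0
  have hinv : Tendsto (fun j => ((n j : ℝ))⁻¹) atTop (nhds 0) := hn.inv_tendsto_atTop
  have h0 : Tendsto (fun j => ((m j : ℝ) * Real.log lam + (n j : ℝ) * Real.log r)
      / (n j : ℝ)) atTop (nhds 0) := by
    have := hlog.mul hinv
    simpa [div_eq_mul_inv] using this
  have key : Tendsto (fun j => (((m j : ℝ) * Real.log lam + (n j : ℝ) * Real.log r)
      / (n j : ℝ) - Real.log r) / Real.log lam) atTop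
      (nhds (-(Real.log r / Real.log lam))) := by
    have := (h0.sub_const (Real.log r)).div_const (Real.log lam)
    simpa [neg_div] using this
  refine key.congr' ?_
  filter_upwards [hn.eventually_gt_atTop 0] with j hj
  have hjne : (n j : ℝ) ≠ 0 := ne_of_gt hj
  field_simp
  ring
end

section
/- Let 0 < λ < 1, r > 1, 0 < λ' < 1, r' > 1 and w₀, w₀' > 0. Suppose (m_j), (n_j) are sequences of natural numbers with n_j → ∞, λ^{m_j} r^{n_j} → w₀ and λ'^{m_j} r'^{n_j} → w₀'. Then (log λ)/(log r) = (log λ')/(log r'). -/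
/-!
Taking logarithms, `m_j log λ + n_j log r → log w₀`; dividing by `n_j → ∞` shows that
`m_j / n_j → -log r / log λ`. The same sequence `m_j / n_j` also tends to `-log r' / log λ'`,
and uniqueness of limits gives the claim after inverting both sides.
-/

open Filter Real Topology

theorem tendsto_div_of_tendsto_mul_add {α : Type*} {l : Filter α} {u v : α → ℝ} {a b c : ℝ}
    (ha : a ≠ 0) (hv : Tendsto v l atTop) (h : Tendsto (fun x => u x * a + v x * b) l (𝓝 c)) :
    Tendsto (fun x => u x / v x) l (𝓝 (-b / a)) := by
  have hdiv : Tendsto (fun x => u x / v x * a + b) l (𝓝 0) := by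
    refine (h.div_atTop hv).congr' ?_
    filter_upwards [hv.eventually_gt_atTop 0] with x hx
    field_simp
  have hmul : Tendsto (fun x => u x / v x * a) l (𝓝 (-b)) := by
    simpa using hdiv.sub_const b
  simpa [ha] using hmul.div_const a

theorem tendsto_exponent_ratio_of_tendsto_pow_mul_pow {α : Type*} {l : Filter α}
    {lam r w₀ : ℝ} (hlam0 : 0 < lam) (hlam1 : lam ≠ 1) (hr : 0 < r) (hw : w₀ ≠ 0)
    {m n : α → ℕ} (hn : Tendsto (fun x => (n x : ℝ)) l atTop)
    (hconv : Tendsto (fun x => lam ^ m x * r ^ n x) l (𝓝 w₀)) :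
    Tendsto (fun x => (m x : ℝ) / n x) l (𝓝 (-log r / log lam)) := by
  have hlog : Tendsto (fun x => (m x : ℝ) * log lam + n x * log r) l (𝓝 (log w₀)) := by
    refine ((continuousAt_log hw).tendsto.comp hconv).congr fun x => ?_
    simp only [Function.comp_apply]
    rw [log_mul (pow_pos hlam0 _).ne' (pow_pos hr _).ne', log_pow, log_pow]
  have hloglam : log lam ≠ 0 := log_ne_zero_of_pos_of_ne_one hlam0 hlam1
  exact tendsto_div_of_tendsto_mul_add hloglam hn hlog

theorem stmt_1 (lam r lam' r' w₀ w₀' : ℝ)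
    (hlam0 : 0 < lam) (hlam1 : lam < 1) (hr : 1 < r)
    (hlam0' : 0 < lam') (hlam1' : lam' < 1) (hr' : 1 < r')
    (hw : 0 < w₀) (hw' : 0 < w₀') (m n : ℕ → ℕ)
    (hn : Tendsto (fun j => (n j : ℝ)) atTop atTop)
    (hconv : Tendsto (fun j => lam ^ (m j) * r ^ (n j)) atTop (nhds w₀))
    (hconv' : Tendsto (fun j => lam' ^ (m j) * r' ^ (n j)) atTop (nhds w₀')) :
    Real.log lam / Real.log r = Real.log lam' / Real.log r' := by
  have hratio : -log r / log lam = -log r' / log lam' :=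
    tendsto_nhds_unique
      (tendsto_exponent_ratio_of_tendsto_pow_mul_pow hlam0 hlam1.ne (by linarith) hw.ne' hn hconv)
      (tendsto_exponent_ratio_of_tendsto_pow_mul_pow hlam0' hlam1'.ne (by linarith) hw'.ne' hn
        hconv')
  simpa [inv_div, div_neg] using congrArg Inv.inv hratio
end

section
/- Let u, v be coprime natural numbers with 0 ≤ v < u and u ≥ 1, and let θ = 2πv/u, θ' = 2πv'/u with 0 ≤ v' < u. Suppose there exists an orientation-preserving homeomorphism η₀ : S¹ → S¹ and angles α, α' ∈ ℝ such that η₀(e^{i(α + kθ)}) = e^{i(α' + kθ')} for all k = 0, 1, …, u−1, and the points e^{i(α+kθ)}, k = 0, …, u−1, are pairwise distinct. Then v = v', hence θ = θ'. -/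
/-!
Since `v` is a unit mod `u`, every lattice point `α + 2πj/u` is congruent mod `2π` to an orbit
point `α + kθ`, so the lift `η` maps the lattice `α + (2π/u)ℤ` into `α' + (2π/u)ℤ`. A strictly
monotone map between these lattices that commutes with translation by `u` steps must advance
exactly one step for each step, hence acts on the lattice as a translation. Applied at `α` and
`α + θ`, this gives `v ≡ v' [MOD u]`.
-/

open Real

theorem StrictMono.apply_add_le {f : ℕ → ℤ} (hf : StrictMono f) (n m : ℕ) :
    f n + m ≤ f (n + m) := by
  induction m with
  | zero => simp
  | succ m ih =>
    have := hf (show n + m < n + (m + 1) by omega)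
    push_cast
    omega

theorem StrictMono.apply_eq_add_of_apply_eq_add {f : ℕ → ℤ} (hf : StrictMono f) {u j : ℕ}
    (hu : f u = f 0 + u) (hj : j ≤ u) : f j = f 0 + j := by
  have h₁ := hf.apply_add_le 0 j
  have h₂ := hf.apply_add_le j (u - j)
  rw [Nat.add_sub_cancel' hj] at h₂
  simp only [zero_add] at h₁
  omega

theorem exists_lt_natCast_mul_modEq {u v : ℕ} (hu : 0 < u) (hcop : Nat.Coprime u v) (j : ℤ) :
    ∃ k : ℕ, k < u ∧ (k * v : ℤ) ≡ j [ZMOD u] := by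
  obtain ⟨y, hy⟩ := Int.mod_coprime hcop.symm
  have hu' : (0 : ℤ) < u := by exact_mod_cast hu
  have hlt := Int.emod_lt_of_pos (j * y) hu'
  have hnonneg := Int.emod_nonneg (j * y) hu'.ne'
  refine ⟨(j * y % u).toNat, by omega, ?_⟩
  rw [Int.toNat_of_nonneg hnonneg]
  calc j * y % u * v ≡ j * y * v [ZMOD u] := (Int.mod_modEq _ _).mul_right _
    _ = j * (v * y) := by ring
    _ ≡ j * 1 [ZMOD u] := hy.mul_left _
    _ = j := mul_one j

section Lift

variable {η : ℝ → ℝ} {c α α' : ℝ} {u : ℕ}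

theorem apply_add_int_mul_of_deck (hdeck : ∀ x, η (x + u * c) = η x + u * c) (n : ℤ) (x : ℝ) :
    η (x + n * (u * c)) = η x + n * (u * c) := by
  have hper : Function.Periodic (fun x => η x - x) (u * c) := fun x => by
    change η (x + u * c) - (x + u * c) = η x - x
    rw [hdeck]
    ring
  have : η (x + n * (u * c)) - (x + n * (u * c)) = η x - x := hper.int_mul n x
  linarith

theorem exists_apply_add_mul_eq_add_int_mul {v v' : ℕ} (hu : 0 < u) (hcop : Nat.Coprime u v)
    (hdeck : ∀ x, η (x + u * c) = η x + u * c)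
    (horb : ∀ k : ℕ, k < u → ∃ m : ℤ, η (α + k * (v * c)) = α' + k * (v' * c) + m * (u * c))
    (j : ℕ) : ∃ n : ℤ, η (α + j * c) = α' + n * c := by
  obtain ⟨k, hk, hkj⟩ := exists_lt_natCast_mul_modEq hu hcop j
  obtain ⟨q, hq⟩ := hkj.symm.dvd
  obtain ⟨m, hm⟩ := horb k hk
  have hqR : (k : ℝ) * v = j + u * q := by exact_mod_cast (by linarith : (k * v : ℤ) = j + u * q)
  have hsplit : α + k * (v * c) = α + j * c + q * (u * c) := by
    linear_combination c * hqR
  rw [hsplit, apply_add_int_mul_of_deck hdeck] at hm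
  exact ⟨k * v' + (m - q) * u, by push_cast; linear_combination hm⟩

theorem apply_add_mul_eq_of_mapsTo_lattice (hc : 0 < c) (hmono : StrictMono η)
    (hperiod : η (α + u * c) = η α + u * c)
    (hlat : ∀ j : ℕ, ∃ n : ℤ, η (α + j * c) = α' + n * c) {j : ℕ} (hj : j ≤ u) :
    η (α + j * c) = η α + j * c := by
  choose f hf using hlat
  have hf0 : η α = α' + f 0 * c := by simpa using hf 0
  have hfmono : StrictMono f := strictMono_nat_of_lt_succ fun j => by
    have := hmono (by push_cast; nlinarith : α + j * c < α + ((j + 1 : ℕ) : ℝ) * c)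
    rw [hf, hf] at this
    exact_mod_cast lt_of_mul_lt_mul_right (by linarith : (f j : ℝ) * c < f (j + 1) * c) hc.le
  have hfu : f u = f 0 + u := by
    have := hf u
    rw [hperiod, hf0] at this
    exact_mod_cast (mul_right_cancel₀ hc.ne' (by linarith) : ((f u : ℤ) : ℝ) = f 0 + u)
  rw [hf, hf0, hfmono.apply_eq_add_of_apply_eq_add hfu hj]
  push_cast
  ring

end Lift

theorem stmt_3_general (u v v' : ℕ) (hcop : Nat.Coprime u v)
    (hv : v < u) (hv' : v' < u) (θ θ' α α' : ℝ)
    (hθ : θ = 2 * π * v / u) (hθ' : θ' = 2 * π * v' / u)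
    (η : ℝ → ℝ) (hmono : StrictMono η)
    (hdeck : ∀ x, η (x + 2 * π) = η x + 2 * π)
    (horb : ∀ k : ℕ, k < u → ∃ m : ℤ,
      η (α + k * θ) = α' + k * θ' + 2 * π * m) :
    v = v' ∧ θ = θ' := by
  suffices hvv : v = v' from ⟨hvv, by rw [hθ, hθ', hvv]⟩
  obtain hu1 | hu1 := (show u ≤ 1 ∨ 1 < u by omega)
  · omega
  have hu : (0 : ℝ) < u := by exact_mod_cast (show 0 < u by omega)
  set c := 2 * π / u with hc_def
  have hc : 0 < c := by positivity
  have h2π : 2 * π = u * c := by rw [hc_def]; field_simp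
  have hθc : θ = v * c := by rw [hθ, hc_def]; ring
  have hθ'c : θ' = v' * c := by rw [hθ', hc_def]; ring
  have horb' : ∀ k : ℕ, k < u → ∃ m : ℤ,
      η (α + k * (v * c)) = α' + k * (v' * c) + m * (u * c) := fun k hk => by
    obtain ⟨m, hm⟩ := horb k hk
    refine ⟨m, ?_⟩
    rw [hθc, hθ'c, h2π] at hm
    linear_combination hm
  rw [h2π] at hdeck
  have hlat := exists_apply_add_mul_eq_add_int_mul (by omega) hcop hdeck horb'
  have htrans := apply_add_mul_eq_of_mapsTo_lattice hc hmono (hdeck α) hlat hv.le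
  obtain ⟨m₀, hm₀⟩ := horb' 0 (by omega)
  obtain ⟨m₁, hm₁⟩ := horb' 1 hu1
  have hR : (v : ℝ) = v' + (m₁ - m₀) * u := by
    refine mul_right_cancel₀ hc.ne' ?_
    simp only [Nat.cast_zero, Nat.cast_one, zero_mul, one_mul, add_zero] at hm₀ hm₁
    linear_combination hm₁ - hm₀ - htrans
  have hmod : v' ≡ v [MOD u] := by
    rw [← Int.natCast_modEq_iff, Int.modEq_iff_dvd]
    exact ⟨m₁ - m₀, by exact_mod_cast (by linarith : (v : ℝ) - v' = u * ((m₁ : ℝ) - m₀))⟩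
  exact hmod.symm.eq_of_lt_of_lt hv hv'

/-- Rational-angle case of Theorem A(2): an orientation-preserving circle
homeomorphism (encoded by a continuous strictly monotone lift `η` commuting
with `x ↦ x + 2π`) carrying the orbit `e^{i(α+kθ)}` of the rotation by
`θ = 2πv/u` to the orbit `e^{i(α'+kθ')}` of the rotation by `θ' = 2πv'/u`
forces `v = v'`, hence `θ = θ'`. -/
theorem stmt_3 (u v v' : ℕ) (hu : 1 ≤ u) (hcop : Nat.Coprime u v)
    (hv : v < u) (hv' : v' < u) (θ θ' α α' : ℝ)
    (hθ : θ = 2 * π * v / u) (hθ' : θ' = 2 * π * v' / u)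
    (η : ℝ → ℝ) (hcont : Continuous η) (hmono : StrictMono η)
    (hdeck : ∀ x, η (x + 2 * π) = η x + 2 * π)
    (horb : ∀ k : ℕ, k < u → ∃ m : ℤ,
      η (α + k * θ) = α' + k * θ' + 2 * π * m)
    (hdist : ∀ k l : ℕ, k < u → l < u → k ≠ l →
      Complex.exp (Complex.I * (α + k * θ)) ≠
        Complex.exp (Complex.I * (α + l * θ))) :
    v = v' ∧ θ = θ' :=
  stmt_3_general u v v' hcop hv hv' θ θ' α α' hθ hθ' η hmono hdeck horb
end

section
/- Let a > 0 and let γ : [0, L] → ℂ be a C² unit-speed curve contained in the closed disk D_a = {z : |z| ≤ a} whose curvature satisfies |γ''(t)| < 1/a for all t. If γ passes through points distinct from its endpoints, then there is at most one parameter t₀ at which |γ(t₀)| attains the minimum dist(0, γ) — i.e., the closest point of γ to the origin is unique. -/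
/-!
Along a unit-speed curve, `f t = ⟪γ t, γ' t⟫` is half the derivative of `‖γ t‖²`, so it vanishes
at every interior minimiser of `‖γ‖`. Its derivative `‖γ'‖² + ⟪γ, γ''⟫ ≥ 1 - ‖γ‖ ‖γ''‖` is positive
when `‖γ‖ ≤ a` and `‖γ''‖ < 1 / a`, so `f` is strictly increasing and has at most one zero.
-/

open Set

open scoped RealInnerProductSpace

variable {E : Type*} [NormedAddCommGroup E] [InnerProductSpace ℝ E]

theorem abs_real_inner_lt_one_of_norm_le_of_norm_lt_one_div {x y : E} {a : ℝ} (ha : 0 < a)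
    (hx : ‖x‖ ≤ a) (hy : ‖y‖ < 1 / a) : |⟪x, y⟫| < 1 :=
  calc |⟪x, y⟫| ≤ ‖x‖ * ‖y‖ := abs_real_inner_le_norm x y
    _ ≤ a * ‖y‖ := by gcongr
    _ < a * (1 / a) := by gcongr
    _ = 1 := mul_one_div_cancel ha.ne'

theorem inner_deriv_eq_zero_of_isLocalMin_norm {γ : ℝ → E} {t : ℝ}
    (hmin : IsLocalMin (‖γ ·‖) t) (hγ : DifferentiableAt ℝ γ t) : ⟪γ t, deriv γ t⟫ = 0 := by
  have hmin_sq : IsLocalMin (‖γ ·‖ ^ 2) t := by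
    filter_upwards [hmin] with s hs using pow_le_pow_left₀ (norm_nonneg _) hs 2
  have := hmin_sq.hasDerivAt_eq_zero hγ.hasDerivAt.norm_sq
  linarith

theorem hasDerivAt_inner_deriv {γ : ℝ → E} {s : Set ℝ} (hs : IsOpen s)
    (hγ : ContDiffOn ℝ 2 γ s) {t : ℝ} (ht : t ∈ s) :
    HasDerivAt (fun u => ⟪γ u, deriv γ u⟫) (⟪γ t, deriv (deriv γ) t⟫ + ‖deriv γ t‖ ^ 2) t := by
  have hγ' : DifferentiableAt ℝ (deriv γ) t :=
    ((hγ.deriv_of_isOpen hs (m := 1) (by norm_num)).differentiableOn one_ne_zero t ht).differentiableAt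
      (hs.mem_nhds ht)
  have hγt : DifferentiableAt ℝ γ t :=
    (hγ.differentiableOn (by norm_num) t ht).differentiableAt (hs.mem_nhds ht)
  simpa only [real_inner_self_eq_norm_sq] using hγt.hasDerivAt.inner ℝ hγ'.hasDerivAt

theorem strictMonoOn_inner_deriv {γ : ℝ → E} {a b c : ℝ} (ha : 0 < a)
    (hγ : ContDiffOn ℝ 2 γ (Ioo b c))
    (hunit : ∀ t ∈ Ioo b c, ‖deriv γ t‖ = 1)
    (hcurv : ∀ t ∈ Ioo b c, ‖deriv (deriv γ) t‖ < 1 / a)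
    (hball : ∀ t ∈ Ioo b c, ‖γ t‖ ≤ a) :
    StrictMonoOn (fun t => ⟪γ t, deriv γ t⟫) (Ioo b c) := by
  have hderiv := fun t (ht : t ∈ Ioo b c) => hasDerivAt_inner_deriv isOpen_Ioo hγ ht
  refine strictMonoOn_of_hasDerivWithinAt_pos (convex_Ioo b c)
    (fun t ht => (hderiv t ht).continuousAt.continuousWithinAt)
    (fun t ht => (hderiv t (interior_subset ht)).hasDerivWithinAt) fun t ht => ?_
  rw [interior_Ioo] at ht
  have := abs_real_inner_lt_one_of_norm_le_of_norm_lt_one_div ha (hball t ht) (hcurv t ht)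
  rw [hunit t ht]
  linarith [neg_abs_le ⟪γ t, deriv (deriv γ) t⟫]

theorem stmt_9_general (a L : ℝ) (ha : 0 < a) (γ : ℝ → ℂ)
    (hsm : ContDiffOn ℝ 2 γ (Icc 0 L))
    (hunit : ∀ t ∈ Icc 0 L, ‖deriv γ t‖ = 1)
    (hcurv : ∀ t ∈ Icc 0 L, ‖deriv (deriv γ) t‖ < 1 / a)
    (hdisk : ∀ t ∈ Icc 0 L, ‖γ t‖ ≤ a)
    (t₁ t₂ : ℝ) (ht₁ : t₁ ∈ Ioo 0 L) (ht₂ : t₂ ∈ Ioo 0 L)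
    (hmin₁ : IsMinOn (fun t => ‖γ t‖) (Icc 0 L) t₁)
    (hmin₂ : IsMinOn (fun t => ‖γ t‖) (Icc 0 L) t₂) :
    t₁ = t₂ := by
  have hsub : Ioo (0 : ℝ) L ⊆ Icc 0 L := Ioo_subset_Icc_self
  have hsm' : ContDiffOn ℝ 2 γ (Ioo 0 L) := hsm.mono hsub
  have hmono := strictMonoOn_inner_deriv ha hsm' (fun t ht => hunit t (hsub ht))
    (fun t ht => hcurv t (hsub ht)) (fun t ht => hdisk t (hsub ht))
  have hcrit : ∀ t ∈ Ioo 0 L, IsMinOn (fun t => ‖γ t‖) (Icc 0 L) t → ⟪γ t, deriv γ t⟫ = 0 :=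
    fun t ht hmin => inner_deriv_eq_zero_of_isLocalMin_norm
      (hmin.isLocalMin (Icc_mem_nhds ht.1 ht.2))
      ((hsm'.differentiableOn (by norm_num) t ht).differentiableAt (isOpen_Ioo.mem_nhds ht))
  exact hmono.injOn ht₁ ht₂ ((hcrit t₁ ht₁ hmin₁).trans (hcrit t₂ ht₂ hmin₂).symm)

/-- A unit-speed `C²` curve in the disk of radius `a` with curvature
everywhere `< 1/a` has at most one interior parameter realizing the minimum
distance to the origin. -/
theorem stmt_9 (a L : ℝ) (ha : 0 < a) (hL : 0 < L) (γ : ℝ → ℂ)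
    (hsm : ContDiffOn ℝ 2 γ (Icc 0 L))
    (hunit : ∀ t ∈ Icc 0 L, ‖deriv γ t‖ = 1)
    (hcurv : ∀ t ∈ Icc 0 L, ‖deriv (deriv γ) t‖ < 1 / a)
    (hdisk : ∀ t ∈ Icc 0 L, ‖γ t‖ ≤ a)
    (t₁ t₂ : ℝ) (ht₁ : t₁ ∈ Ioo 0 L) (ht₂ : t₂ ∈ Ioo 0 L)
    (hmin₁ : IsMinOn (fun t => ‖γ t‖) (Icc 0 L) t₁)
    (hmin₂ : IsMinOn (fun t => ‖γ t‖) (Icc 0 L) t₂) :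
    t₁ = t₂ :=
  stmt_9_general a L ha γ hsm hunit hcurv hdisk t₁ t₂ ht₁ ht₂ hmin₁ hmin₂
end

section
/- Let (γ_j) be a sequence of C² curves in the closed disk D_a ⊂ ℂ, each of length between positive constants L₁ and L₂, with endpoints on the boundary circle |z| = a, such that κ(γ_j) → 0 and the closest-point distances d(0, γ_j) → w₀ with 0 < w₀ < a, and such that the directions ϑ(γ_j) converge to θ*. Then γ_j converges uniformly (as sets, in Hausdorff distance) to the straight chord of D_a at distance w₀ from the origin with direction θ*. -/
/-!
By Taylor's formula, a curve whose second derivative is bounded by `κ` stays within `κ L²` of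
its tangent line `p + s e` at the point `p` closest to the origin. There `|γ|` has an interior
minimum, so `p ⟂ e` and `|p + s e|² = |p|² + s²`; since both endpoints of the curve lie on
`|z| = a`, the tangent segment runs, up to errors vanishing with `κ`, from the parameter
`-√(a² - |p|²)` to `√(a² - |p|²)`. Hence the tangent segments converge endpointwise to the
chord, and two segments are Hausdorff-close as soon as their endpoints are.
-/

open Real Filter Set Metric Topology

theorem hausdorffDist_image_le_of_dist_le {α X : Type*} [PseudoMetricSpace X] {f g : α → X}
    {S : Set α} {r : ℝ} (hr : 0 ≤ r) (h : ∀ t ∈ S, dist (f t) (g t) ≤ r) :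
    hausdorffDist (f '' S) (g '' S) ≤ r :=
  hausdorffDist_le_of_mem_dist hr
    (by rintro _ ⟨t, ht, rfl⟩; exact ⟨g t, mem_image_of_mem g ht, h t ht⟩)
    (by rintro _ ⟨t, ht, rfl⟩; exact ⟨f t, mem_image_of_mem f ht, dist_comm (f t) _ ▸ h t ht⟩)

section NormedSpace

variable {E : Type*} [NormedAddCommGroup E] [NormedSpace ℝ E]

theorem image_Icc_add_smul (x e : E) {lo hi : ℝ} (h : lo ≤ hi) :
    (fun t : ℝ => x + t • e) '' Icc lo hi = segment ℝ (x + lo • e) (x + hi • e) := by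
  have hline : (fun t : ℝ => x + t • e) = AffineMap.lineMap x (x + e) := by
    funext t
    simp [AffineMap.lineMap_apply_module', add_comm]
  rw [← segment_eq_Icc h, hline, image_segment, ← hline]

theorem hausdorffDist_segment_le (x y x' y' : E) :
    hausdorffDist (segment ℝ x y) (segment ℝ x' y') ≤ max (dist x x') (dist y y') := by
  have key : ∀ x y x' y' : E, ∀ z ∈ segment ℝ x y, ∃ z' ∈ segment ℝ x' y',
      dist z z' ≤ max (dist x x') (dist y y') := by
    rintro x y x' y' _ ⟨s, t, hs, ht, hst, rfl⟩
    refine ⟨s • x' + t • y', ⟨s, t, hs, ht, hst, rfl⟩, ?_⟩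
    calc dist (s • x + t • y) (s • x' + t • y')
        ≤ dist (s • x) (s • x') + dist (t • y) (t • y') := dist_add_add_le _ _ _ _
      _ = s * dist x x' + t * dist y y' := by
        rw [dist_smul₀, dist_smul₀, Real.norm_of_nonneg hs, Real.norm_of_nonneg ht]
      _ ≤ s * max (dist x x') (dist y y') + t * max (dist x x') (dist y y') := by
        gcongr
        exacts [le_max_left _ _, le_max_right _ _]
      _ = max (dist x x') (dist y y') := by rw [← add_mul, hst, one_mul]
  refine hausdorffDist_le_of_mem_dist (le_max_of_le_left dist_nonneg) (key x y x' y') ?_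
  simpa only [dist_comm] using key x' y' x y

noncomputable def tangentLine (γ : ℝ → E) (t₀ t : ℝ) : E :=
  γ t₀ + (t - t₀) • deriv γ t₀

theorem norm_sub_tangentLine_le {γ : ℝ → E} {C L t₀ t : ℝ} (hγ : ContDiff ℝ 2 γ)
    (hC : ∀ u ∈ Icc 0 L, ‖deriv (deriv γ) u‖ ≤ C) (ht₀ : t₀ ∈ Icc 0 L) (ht : t ∈ Icc 0 L) :
    ‖γ t - tangentLine γ t₀ t‖ ≤ C * L ^ 2 := by
  have hγ' : ContDiff ℝ (1 + 1) γ := hγ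
  rw [contDiff_succ_iff_deriv] at hγ'
  obtain ⟨hdiff, -, hderiv⟩ := hγ'
  have hdist : ∀ u ∈ Icc 0 L, |u - t₀| ≤ L := fun u hu =>
    abs_sub_le_iff.mpr ⟨by linarith [hu.2, ht₀.1], by linarith [hu.1, ht₀.2]⟩
  have hC0 : 0 ≤ C := (norm_nonneg _).trans (hC t₀ ht₀)
  have hCL : 0 ≤ C * L := mul_nonneg hC0 (ht₀.1.trans ht₀.2)
  have hlip : ∀ u ∈ Icc 0 L, ‖deriv γ u - deriv γ t₀‖ ≤ C * L := fun u hu =>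
    calc ‖deriv γ u - deriv γ t₀‖ ≤ C * ‖u - t₀‖ :=
          (convex_Icc 0 L).norm_image_sub_le_of_norm_deriv_le
            (fun v _ => hderiv.differentiable one_ne_zero v) hC ht₀ hu
      _ ≤ C * L := mul_le_mul_of_nonneg_left (hdist u hu) hC0
  have hmvt := (convex_Icc 0 L).norm_image_sub_le_of_norm_hasDerivWithin_le
    (f := fun u => γ u - u • deriv γ t₀)
    (fun u _ => (((hdiff u).hasDerivAt.sub ((hasDerivAt_id u).smul_const _)).congr_deriv
      (by simp)).hasDerivWithinAt) hlip ht₀ ht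
  calc ‖γ t - tangentLine γ t₀ t‖
      = ‖γ t - t • deriv γ t₀ - (γ t₀ - t₀ • deriv γ t₀)‖ := by
        rw [tangentLine, sub_smul]; congr 1; abel
    _ ≤ C * L * ‖t - t₀‖ := hmvt
    _ ≤ C * L * L := mul_le_mul_of_nonneg_left (hdist t ht) hCL
    _ = C * L ^ 2 := by ring

theorem hausdorffDist_image_Icc_segment_le {γ : ℝ → E} {C L t₀ : ℝ} (hγ : ContDiff ℝ 2 γ)
    (hC : ∀ u ∈ Icc 0 L, ‖deriv (deriv γ) u‖ ≤ C) (ht₀ : t₀ ∈ Icc 0 L) (x y : E) :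
    hausdorffDist (γ '' Icc 0 L) (segment ℝ x y) ≤
      C * L ^ 2 + max (dist (tangentLine γ t₀ 0) x) (dist (tangentLine γ t₀ L) y) := by
  have hL : 0 ≤ L := ht₀.1.trans ht₀.2
  have himg : tangentLine γ t₀ '' Icc 0 L =
      segment ℝ (tangentLine γ t₀ 0) (tangentLine γ t₀ L) := by
    have hT : tangentLine γ t₀ = fun t => (γ t₀ - t₀ • deriv γ t₀) + t • deriv γ t₀ := by
      funext t
      rw [tangentLine, sub_smul]
      abel
    rw [hT]
    exact image_Icc_add_smul _ _ hL
  have hfin : hausdorffEDist (γ '' Icc 0 L) (tangentLine γ t₀ '' Icc 0 L) ≠ ⊤ :=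
    hausdorffEDist_ne_top_of_nonempty_of_bounded ((nonempty_Icc.2 hL).image _)
      ((nonempty_Icc.2 hL).image _) (isCompact_Icc.image hγ.continuous).isBounded
      (isCompact_Icc.image (by unfold tangentLine; fun_prop)).isBounded
  calc hausdorffDist (γ '' Icc 0 L) (segment ℝ x y)
      ≤ hausdorffDist (γ '' Icc 0 L) (tangentLine γ t₀ '' Icc 0 L) +
          hausdorffDist (tangentLine γ t₀ '' Icc 0 L) (segment ℝ x y) :=
        hausdorffDist_triangle hfin
    _ ≤ _ := by
      gcongr
      · exact hausdorffDist_image_le_of_dist_le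
          (mul_nonneg ((norm_nonneg _).trans (hC t₀ ht₀)) (sq_nonneg L))
          fun t ht => (dist_eq_norm _ _).trans_le (norm_sub_tangentLine_le hγ hC ht₀ ht)
      · rw [himg]
        exact hausdorffDist_segment_le _ _ _ _

end NormedSpace

section InnerProductSpace

variable {E : Type*} [NormedAddCommGroup E] [InnerProductSpace ℝ E]

open RealInnerProductSpace

theorem IsLocalMin.inner_eq_zero_of_hasDerivAt {γ : ℝ → E} {γ' : E} {t₀ : ℝ}
    (hmin : IsLocalMin (fun t => ‖γ t‖) t₀) (hγ : HasDerivAt γ γ' t₀) :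
    ⟪γ t₀, γ'⟫ = 0 := by
  have hsq : IsLocalMin (fun t => ‖γ t‖ ^ 2) t₀ :=
    hmin.mono fun _ h => pow_le_pow_left₀ (norm_nonneg _) h 2
  simpa using hsq.hasDerivAt_eq_zero hγ.norm_sq

theorem IsMinOn.inner_deriv_eq_zero {γ : ℝ → E} {L t₀ : ℝ}
    (hmin : IsMinOn (fun t => ‖γ t‖) (Icc 0 L) t₀) (ht₀ : t₀ ∈ Icc 0 L)
    (hγ : DifferentiableAt ℝ γ t₀) (h0 : ‖γ t₀‖ < ‖γ 0‖) (hL : ‖γ t₀‖ < ‖γ L‖) :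
    ⟪γ t₀, deriv γ t₀⟫ = 0 := by
  have hlo : 0 < t₀ := ht₀.1.lt_of_ne (by rintro rfl; exact h0.false)
  have hhi : t₀ < L := ht₀.2.lt_of_ne (by rintro rfl; exact hL.false)
  exact (hmin.isLocalMin (Icc_mem_nhds hlo hhi)).inner_eq_zero_of_hasDerivAt hγ.hasDerivAt

theorem norm_add_smul_sq_of_inner_eq_zero {p e : E} (he : ‖e‖ = 1) (hpe : ⟪p, e⟫ = 0) (s : ℝ) :
    ‖p + s • e‖ ^ 2 = ‖p‖ ^ 2 + s ^ 2 := by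
  rw [norm_add_sq_real, inner_smul_right, hpe, norm_smul, he, Real.norm_eq_abs, mul_one, sq_abs]
  ring

theorem setOf_norm_le_line_eq_segment {P v : E} (hv : ‖v‖ = 1) (hPv : ⟪P, v⟫ = 0) {a : ℝ}
    (ha : ‖P‖ ≤ a) :
    {z | ‖z‖ ≤ a ∧ ∃ s : ℝ, z = P + s • v} =
      segment ℝ (P + (-√(a ^ 2 - ‖P‖ ^ 2)) • v) (P + √(a ^ 2 - ‖P‖ ^ 2) • v) := by
  have ha0 : 0 ≤ a := (norm_nonneg P).trans ha
  have hiff : ∀ s : ℝ, ‖P + s • v‖ ≤ a ↔ s ∈ Icc (-√(a ^ 2 - ‖P‖ ^ 2)) √(a ^ 2 - ‖P‖ ^ 2) := by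
    intro s
    rw [mem_Icc, ← Real.sq_le (sub_nonneg.2 (pow_le_pow_left₀ (norm_nonneg _) ha 2)),
      le_sub_iff_add_le', ← norm_add_smul_sq_of_inner_eq_zero hv hPv,
      pow_le_pow_iff_left₀ (norm_nonneg _) ha0 two_ne_zero]
  rw [← image_Icc_add_smul _ _ (neg_le_self (sqrt_nonneg _))]
  ext z
  constructor
  · rintro ⟨hz, s, rfl⟩
    exact ⟨s, (hiff s).1 hz, rfl⟩
  · rintro ⟨s, hs, rfl⟩
    exact ⟨(hiff s).2 hs, s, rfl⟩

theorem tendsto_abs_of_norm_eq_of_tendsto_sub {ι : Type*} {l : Filter ι} {u p e : ι → E}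
    {s : ι → ℝ} {P : E} {a : ℝ} (hu : ∀ j, ‖u j‖ = a)
    (hclose : Tendsto (fun j => u j - (p j + s j • e j)) l (𝓝 0)) (he : ∀ j, ‖e j‖ = 1)
    (horth : ∀ᶠ j in l, ⟪p j, e j⟫ = 0) (hp : Tendsto p l (𝓝 P)) :
    Tendsto (fun j => |s j|) l (𝓝 √(a ^ 2 - ‖P‖ ^ 2)) := by
  have hnorm : Tendsto (fun j => ‖p j + s j • e j‖) l (𝓝 a) := by
    rw [tendsto_iff_norm_sub_tendsto_zero]
    refine squeeze_zero (fun j => norm_nonneg _) (fun j => ?_) (by simpa using hclose.norm)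
    rw [Real.norm_eq_abs, ← hu j, norm_sub_rev (u j)]
    exact abs_norm_sub_norm_le _ _
  refine (((hnorm.pow 2).sub (hp.norm.pow 2)).sqrt).congr' (horth.mono fun j hj => ?_)
  rw [norm_add_smul_sq_of_inner_eq_zero (he j) hj, add_sub_cancel_left, sqrt_sq_eq_abs]

theorem tendsto_hausdorffDist_image_segment {ι : Type*} {l : Filter ι} {γ : ι → ℝ → E}
    {L κ t₀ : ι → ℝ} {P v : E} {a : ℝ} (hγ : ∀ j, ContDiff ℝ 2 (γ j))
    (hκ : ∀ j, ∀ t ∈ Icc 0 (L j), ‖deriv (deriv (γ j)) t‖ ≤ κ j)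
    (hκL : Tendsto (fun j => κ j * L j ^ 2) l (𝓝 0)) (ht₀ : ∀ j, t₀ j ∈ Icc 0 (L j))
    (hend : ∀ j, ‖γ j 0‖ = a ∧ ‖γ j (L j)‖ = a) (hunit : ∀ j, ‖deriv (γ j) (t₀ j)‖ = 1)
    (horth : ∀ᶠ j in l, ⟪γ j (t₀ j), deriv (γ j) (t₀ j)⟫ = 0)
    (hpos : Tendsto (fun j => γ j (t₀ j)) l (𝓝 P))
    (hdir : Tendsto (fun j => deriv (γ j) (t₀ j)) l (𝓝 v)) :
    Tendsto (fun j => hausdorffDist (γ j '' Icc 0 (L j))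
      (segment ℝ (P + (-√(a ^ 2 - ‖P‖ ^ 2)) • v) (P + √(a ^ 2 - ‖P‖ ^ 2) • v))) l (𝓝 0) := by
  have hL : ∀ j, 0 ≤ L j := fun j => (ht₀ j).1.trans (ht₀ j).2
  have hclose : ∀ t : ι → ℝ, (∀ j, t j ∈ Icc 0 (L j)) →
      Tendsto (fun j => γ j (t j) - tangentLine (γ j) (t₀ j) (t j)) l (𝓝 0) :=
    fun t ht => squeeze_zero_norm
      (fun j => norm_sub_tangentLine_le (hγ j) (hκ j) (ht₀ j) (ht j)) hκL
  have hleft : Tendsto t₀ l (𝓝 √(a ^ 2 - ‖P‖ ^ 2)) := by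
    refine (tendsto_abs_of_norm_eq_of_tendsto_sub (fun j => (hend j).1)
      (hclose _ fun j => left_mem_Icc.2 (hL j)) hunit horth hpos).congr fun j => ?_
    rw [zero_sub, abs_neg, abs_of_nonneg (ht₀ j).1]
  have hright : Tendsto (fun j => L j - t₀ j) l (𝓝 √(a ^ 2 - ‖P‖ ^ 2)) := by
    refine (tendsto_abs_of_norm_eq_of_tendsto_sub (fun j => (hend j).2)
      (hclose _ fun j => right_mem_Icc.2 (hL j)) hunit horth hpos).congr fun j => ?_
    rw [abs_of_nonneg (sub_nonneg.2 (ht₀ j).2)]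
  have hx : Tendsto (fun j => tangentLine (γ j) (t₀ j) 0) l
      (𝓝 (P + (-√(a ^ 2 - ‖P‖ ^ 2)) • v)) := by
    simpa [tangentLine] using hpos.add (hleft.neg.smul hdir)
  have hy : Tendsto (fun j => tangentLine (γ j) (t₀ j) (L j)) l
      (𝓝 (P + √(a ^ 2 - ‖P‖ ^ 2) • v)) :=
    hpos.add (hright.smul hdir)
  refine squeeze_zero (fun j => hausdorffDist_nonneg)
    (fun j => hausdorffDist_image_Icc_segment_le (hγ j) (hκ j) (ht₀ j) _ _) ?_
  simpa using hκL.add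
    ((tendsto_iff_dist_tendsto_zero.1 hx).max (tendsto_iff_dist_tendsto_zero.1 hy))

end InnerProductSpace

theorem Complex.exp_I_mul_add_pi_div_two (θ : ℝ) :
    Complex.exp (Complex.I * (θ + π / 2)) = Complex.I * Complex.exp (Complex.I * θ) := by
  rw [mul_add, Complex.exp_add, mul_comm Complex.I (π / 2 : ℂ), Complex.exp_pi_div_two_mul_I,
    mul_comm]

theorem stmt_11_general (a L₁ L₂ w₀ θstar : ℝ) (hw0 : 0 < w₀) (hwa : w₀ < a)
    (L : ℕ → ℝ) (hL : ∀ j, L j ∈ Icc L₁ L₂)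
    (γ : ℕ → ℝ → ℂ) (hsm : ∀ j, ContDiff ℝ 2 (γ j))
    (hend : ∀ j, ‖γ j 0‖ = a ∧ ‖γ j (L j)‖ = a)
    (κ : ℕ → ℝ)
    (hκ : ∀ j, ∀ t ∈ Icc 0 (L j), ‖deriv (deriv (γ j)) t‖ ≤ κ j)
    (hκ0 : Tendsto κ atTop (nhds 0))
    (tmin : ℕ → ℝ) (htmem : ∀ j, tmin j ∈ Icc 0 (L j))
    (htmin : ∀ j, IsMinOn (fun t => ‖γ j t‖) (Icc 0 (L j)) (tmin j))
    (hpos : Tendsto (fun j => γ j (tmin j)) atTop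
      (nhds ((w₀ : ℂ) * Complex.exp (Complex.I * (θstar + π / 2)))))
    (ϑ : ℕ → ℝ)
    (hdir : ∀ j, deriv (γ j) (tmin j) = Complex.exp (Complex.I * ϑ j))
    (hϑ : Tendsto ϑ atTop (nhds θstar)) :
    Tendsto (fun j => Metric.hausdorffDist ((γ j) '' Icc 0 (L j))
      {z : ℂ | ‖z‖ ≤ a ∧ ∃ t : ℝ,
        z = (w₀ : ℂ) * Complex.exp (Complex.I * (θstar + π / 2)) +
          (t : ℂ) * Complex.exp (Complex.I * θstar)})
      atTop (nhds 0) := by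
  set v := Complex.exp (Complex.I * θstar)
  set P := (w₀ : ℂ) * Complex.exp (Complex.I * (θstar + π / 2))
  have hv : ‖v‖ = 1 := Complex.norm_exp_I_mul_ofReal θstar
  have hPI : P = w₀ • Complex.I • v := by
    simp only [P, v, Complex.exp_I_mul_add_pi_div_two, Complex.real_smul, smul_eq_mul]
  have hPv : inner ℝ P v = 0 := by
    rw [hPI, real_inner_smul_left, real_inner_comm]
    exact mul_eq_zero_of_right _ (real_inner_I_smul_self ℂ v)
  have hP : ‖P‖ = w₀ := by
    rw [hPI, norm_smul, norm_smul, Complex.norm_I, hv, Real.norm_of_nonneg hw0.le, one_mul,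
      mul_one]
  have hκ_nonneg : ∀ j, 0 ≤ κ j := fun j => (norm_nonneg _).trans (hκ j _ (htmem j))
  have hκL : Tendsto (fun j => κ j * L j ^ 2) atTop (𝓝 0) :=
    squeeze_zero (fun j => mul_nonneg (hκ_nonneg j) (sq_nonneg _))
      (fun j => mul_le_mul_of_nonneg_left
        (pow_le_pow_left₀ ((htmem j).1.trans (htmem j).2) (hL j).2 2) (hκ_nonneg j))
      (by simpa using hκ0.mul_const (L₂ ^ 2))
  have horth : ∀ᶠ j in atTop, inner ℝ (γ j (tmin j)) (deriv (γ j) (tmin j)) = 0 := by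
    filter_upwards [hpos.norm.eventually_lt_const (hP ▸ hwa)] with j hj
    exact (htmin j).inner_deriv_eq_zero (htmem j)
      ((hsm j).differentiable two_ne_zero _) (by rwa [(hend j).1]) (by rwa [(hend j).2])
  have hev : Tendsto (fun j => deriv (γ j) (tmin j)) atTop (𝓝 v) := by
    simp_rw [hdir]
    exact ((Complex.continuous_exp.comp (continuous_const.mul Complex.continuous_ofReal)).tendsto
      θstar).comp hϑ
  simp only [← Complex.real_smul]
  rw [setOf_norm_le_line_eq_segment hv hPv (hP.trans_le hwa.le)]
  exact tendsto_hausdorffDist_image_segment hsm hκ hκL htmem hend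
    (fun j => hdir j ▸ Complex.norm_exp_I_mul_ofReal _) horth hpos hev

/-- Curves in the disk `D_a` with curvature tending to `0`, closest points
converging to `w₀ e^{i(θ* + π/2)}` (so that the distances to the origin tend
to `w₀`) and directions at the closest points converging to `θ*` converge in
Hausdorff distance to the straight chord of `D_a` at distance `w₀` from the
origin with direction `θ*`. -/
theorem stmt_11 (a L₁ L₂ w₀ θstar : ℝ) (ha : 0 < a) (hL₁ : 0 < L₁)
    (hL₁₂ : L₁ ≤ L₂) (hw0 : 0 < w₀) (hwa : w₀ < a)
    (L : ℕ → ℝ) (hL : ∀ j, L j ∈ Icc L₁ L₂)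
    (γ : ℕ → ℝ → ℂ) (hsm : ∀ j, ContDiff ℝ 2 (γ j))
    (hunit : ∀ j, ∀ t ∈ Icc 0 (L j), ‖deriv (γ j) t‖ = 1)
    (hdisk : ∀ j, ∀ t ∈ Icc 0 (L j), ‖γ j t‖ ≤ a)
    (hend : ∀ j, ‖γ j 0‖ = a ∧ ‖γ j (L j)‖ = a)
    (κ : ℕ → ℝ)
    (hκ : ∀ j, ∀ t ∈ Icc 0 (L j), ‖deriv (deriv (γ j)) t‖ ≤ κ j)
    (hκ0 : Tendsto κ atTop (nhds 0))
    (tmin : ℕ → ℝ) (htmem : ∀ j, tmin j ∈ Icc 0 (L j))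
    (htmin : ∀ j, IsMinOn (fun t => ‖γ j t‖) (Icc 0 (L j)) (tmin j))
    (hdist : Tendsto (fun j => ‖γ j (tmin j)‖) atTop (nhds w₀))
    (hpos : Tendsto (fun j => γ j (tmin j)) atTop
      (nhds ((w₀ : ℂ) * Complex.exp (Complex.I * (θstar + π / 2)))))
    (ϑ : ℕ → ℝ)
    (hdir : ∀ j, deriv (γ j) (tmin j) = Complex.exp (Complex.I * ϑ j))
    (hϑ : Tendsto ϑ atTop (nhds θstar)) :
    Tendsto (fun j => Metric.hausdorffDist ((γ j) '' Icc 0 (L j))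
      {z : ℂ | ‖z‖ ≤ a ∧ ∃ t : ℝ,
        z = (w₀ : ℂ) * Complex.exp (Complex.I * (θstar + π / 2)) +
          (t : ℂ) * Complex.exp (Complex.I * θstar)})
      atTop (nhds 0) :=
  stmt_11_general a L₁ L₂ w₀ θstar hw0 hwa L hL γ hsm hend κ hκ hκ0 tmin htmem htmin hpos ϑ hdir hϑ
end

section
/- Let 0 < λ < 1, r > 1, and c > 0. For any w with 0 < w, there exist strictly increasing sequences (m_j), (n_j) of natural numbers and a real number w₀ with wλ/2 ≤ w₀ ≤ w such that c · λ^{m_j} · r^{n_j} → w₀ as j → ∞. -/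
set_option maxHeartbeats 800000


open Real Filter

theorem stmt_13 (lam r c w : ℝ) (hlam0 : 0 < lam) (hlam1 : lam < 1)
    (hr : 1 < r) (hc : 0 < c) (hw : 0 < w) :
    ∃ (m n : ℕ → ℕ) (w₀ : ℝ), StrictMono m ∧ StrictMono n ∧
      w * lam / 2 ≤ w₀ ∧ w₀ ≤ w ∧
      Tendsto (fun j => c * lam ^ (m j) * r ^ (n j)) atTop (nhds w₀) := by
  have hr0 : (0:ℝ) < r := lt_trans one_pos hr
  -- existence of some m with c λ^m r^n ≤ w
  have hex : ∀ n : ℕ, ∃ m : ℕ, c * lam ^ m * r ^ n ≤ w := by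
    intro n
    have hpos : 0 < w / (c * r ^ n) := div_pos hw (mul_pos hc (pow_pos hr0 n))
    obtain ⟨m, hm⟩ := exists_pow_lt_of_lt_one hpos hlam1
    refine ⟨m, ?_⟩
    have := (lt_div_iff₀ (mul_pos hc (pow_pos hr0 n))).1 hm
    nlinarith [pow_pos hr0 n, pow_pos hlam0 m]
  set f : ℕ → ℕ := fun n => Nat.find (hex n) with hf
  have hfle : ∀ n, c * lam ^ (f n) * r ^ n ≤ w := fun n => Nat.find_spec (hex n)
  -- f tends to atTop
  have hftop : Tendsto f atTop atTop := by
    rw [tendsto_atTop]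
    intro M
    have h1 : Tendsto (fun n : ℕ => c * lam ^ M * r ^ n) atTop atTop :=
      (tendsto_pow_atTop_atTop_of_one_lt hr).const_mul_atTop
        (mul_pos hc (pow_pos hlam0 M))
    filter_upwards [h1.eventually_gt_atTop w] with n hn
    by_contra hlt
    push_neg at hlt
    have hle : lam ^ M ≤ lam ^ (f n) :=
      pow_le_pow_of_le_one hlam0.le hlam1.le hlt.le
    have : c * lam ^ M * r ^ n ≤ c * lam ^ (f n) * r ^ n :=
      mul_le_mul_of_nonneg_right (mul_le_mul_of_nonneg_left hle hc.le)
        (pow_pos hr0 n).le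
    linarith [hfle n]
  -- eventually f n ≥ 1, pick N
  obtain ⟨N, hN⟩ := (tendsto_atTop.1 hftop 1).exists_forall_of_atTop
  -- values from N on lie in Icc (w*lam) w
  have hmem : ∀ j : ℕ, c * lam ^ (f (N + j)) * r ^ (N + j) ∈ Set.Icc (w * lam) w := by
    intro j
    refine ⟨?_, hfle (N + j)⟩
    have h1 : 1 ≤ f (N + j) := hN (N + j) (Nat.le_add_right N j)
    have hmin : ¬ c * lam ^ (f (N + j) - 1) * r ^ (N + j) ≤ w :=
      Nat.find_min (hex (N + j)) (Nat.sub_lt (lt_of_lt_of_le one_pos h1) one_pos)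
    push_neg at hmin
    have hpow : lam ^ (f (N + j)) = lam ^ (f (N + j) - 1) * lam := by
      rw [← pow_succ, Nat.sub_add_cancel h1]
    rw [hpow]
    nlinarith
  -- Bolzano-Weierstrass
  obtain ⟨w₀, hw₀, φ, hφ, hconv⟩ :=
    tendsto_subseq_of_bounded (Metric.isBounded_Icc (w * lam) w) hmem
  rw [closure_Icc] at hw₀
  -- extract subsequence making f strictly increasing
  have hg : Tendsto (fun j => f (N + φ j)) atTop atTop :=
    hftop.comp (tendsto_atTop_mono (fun j => Nat.le_add_left (φ j) N) hφ.tendsto_atTop)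
  obtain ⟨ψ, hψ, hgψ⟩ := strictMono_subseq_of_tendsto_atTop hg
  refine ⟨fun j => f (N + φ (ψ j)), fun j => N + φ (ψ j), w₀, hgψ,
    fun a b hab => by simpa using hφ (hψ hab), ?_, hw₀.2, ?_⟩
  · have : w * lam / 2 ≤ w * lam := by nlinarith
    linarith [hw₀.1]
  · exact hconv.comp hψ.tendsto_atTop
end
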